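/- arXiv:2511.21799 — 2 statements merged into one kernel-verified Lean document; each statement's English description precedes it below -/
import Mathlib

section
/- Let S and S' be two datasets each of size n, differing in at most K samples, with 0-1 loss. Define the empirical objective obj_S(f) = L_S(f) + λΩ(f) where L_S is the 0-1 empirical risk, and let f̂ and f̂' be empirical minimizers on S and S' respectively. Then the Rashomon set R_S(ε) = {f : obj_S(f) ≤ obj_S(f̂) + ε} satisfies R_S(ε) ⊆ R_{S'}(ε + 2K/n), and symmetrically R_{S'}(ε) ⊆ R_S(ε + 2K/n). -/
/-- For 0-1 loss with a nonnegative regularizer, if datasets `S` and `S'`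
of size `n` differ in at most `K` samples, then the Rashomon set of `S` at level `ε` is
contained in the Rashomon set of `S'` at level `ε + 2K/n`, and symmetrically. -/
theorem rashomon_sets_neighboring_datasets
    {X Y F : Type*} [DecidableEq X] [DecidableEq Y]
    (pred : F → X → Y)            -- the model class: each `f : F` predicts via `pred f`
    (n K : ℕ) (hn : 0 < n)
    (S S' : Fin n → X × Y)
    (hK : (Finset.univ.filter fun i => S i ≠ S' i).card ≤ K)
    (lam : ℝ) (hlam : 0 ≤ lam) (Om : F → ℝ) (hOm : ∀ f, 0 ≤ Om f)
    -- empirical objectives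
    (obj obj' : F → ℝ)
    (hobj : ∀ f, obj f =
      (1 / (n : ℝ)) * ∑ i, (if pred f (S i).1 ≠ (S i).2 then (1 : ℝ) else 0) + lam * Om f)
    (hobj' : ∀ f, obj' f =
      (1 / (n : ℝ)) * ∑ i, (if pred f (S' i).1 ≠ (S' i).2 then (1 : ℝ) else 0) + lam * Om f)
    -- empirical minimizers
    (fhat fhat' : F)
    (hfhat : ∀ g, obj fhat ≤ obj g) (hfhat' : ∀ g, obj' fhat' ≤ obj' g)
    (ε : ℝ) :
    (∀ f, obj f ≤ obj fhat + ε → obj' f ≤ obj' fhat' + (ε + 2 * K / n)) ∧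
    (∀ f, obj' f ≤ obj' fhat' + ε → obj f ≤ obj fhat + (ε + 2 * K / n)) := by
  have hn' : (0:ℝ) < n := by exact_mod_cast hn
  have hsum : ∀ (T T' : Fin n → X × Y),
      ((Finset.univ.filter fun i => T i ≠ T' i).card ≤ K) → ∀ f,
      (∑ i, (if pred f (T i).1 ≠ (T i).2 then (1:ℝ) else 0))
        - (∑ i, (if pred f (T' i).1 ≠ (T' i).2 then (1:ℝ) else 0)) ≤ K := by
    intro T T' hTK f
    rw [← Finset.sum_sub_distrib]
    calc (∑ i, ((if pred f (T i).1 ≠ (T i).2 then (1:ℝ) else 0)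
            - (if pred f (T' i).1 ≠ (T' i).2 then (1:ℝ) else 0)))
        ≤ ∑ i : Fin n, (if T i ≠ T' i then (1:ℝ) else 0) := by
          apply Finset.sum_le_sum
          intro i _
          by_cases h : T i = T' i
          · simp [h]
          · simp only [h, if_pos h]
            split_ifs <;> norm_num
      _ = ((Finset.univ.filter fun i => T i ≠ T' i).card : ℝ) := by
          rw [Finset.sum_boole]
      _ ≤ K := by exact_mod_cast hTK
  have hK' : ((Finset.univ.filter fun i => S' i ≠ S i).card ≤ K) := by
    calc _ ≤ (Finset.univ.filter fun i => S i ≠ S' i).card := le_of_eq (by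
            congr 1; ext i; simp [ne_comm])
      _ ≤ K := hK
  have key : ∀ f, obj f ≤ obj' f + K / n := by
    intro f
    rw [hobj, hobj']
    have h := hsum S S' hK f
    set A := (∑ i, (if pred f (S i).1 ≠ (S i).2 then (1:ℝ) else 0)) with hA
    set B := (∑ i, (if pred f (S' i).1 ≠ (S' i).2 then (1:ℝ) else 0)) with hB
    have h2 : (A - B)/(n:ℝ) ≤ (K:ℝ)/n := by gcongr
    have h3 : (1/(n:ℝ))*A - (1/(n:ℝ))*B = (A-B)/n := by ring
    linarith
  have key' : ∀ f, obj' f ≤ obj f + K / n := by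
    intro f
    rw [hobj, hobj']
    have h := hsum S' S hK' f
    set A := (∑ i, (if pred f (S' i).1 ≠ (S' i).2 then (1:ℝ) else 0)) with hA
    set B := (∑ i, (if pred f (S i).1 ≠ (S i).2 then (1:ℝ) else 0)) with hB
    have h2 : (A - B)/(n:ℝ) ≤ (K:ℝ)/n := by gcongr
    have h3 : (1/(n:ℝ))*A - (1/(n:ℝ))*B = (A-B)/n := by ring
    linarith
  constructor
  · intro f hf
    have h1 := key' f
    have h2 := hfhat fhat'
    have h3 := key fhat'
    have h4 : 2 * (K:ℝ) / n = K / n + K / n := by ring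
    linarith
  · intro f hf
    have h1 := key f
    have h2 := hfhat' fhat
    have h3 := key' fhat
    have h4 : 2 * (K:ℝ) / n = K / n + K / n := by ring
    linarith
end

section
/- Let Z₁, …, Z_k be (possibly dependent) Bernoulli random variables with P(Z_i = 1) = p_i ≤ p < 1/2 and pairwise correlations satisfying Cov(Z_i, Z_j) ≤ ρ · √(Var(Z_i)Var(Z_j)) ≤ ρ p(1−p) for all i ≠ j, where 0 ≤ ρ < 1. Let S_k = ∑Z_i. Then P(S_k ≥ k/2) ≤ p(1−p)[1+(k−1)ρ] / (p(1−p)[1+(k−1)ρ] + k(1/2 − p)²). -/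
open MeasureTheory

private lemma cantelli_alg_aux (V t : ℝ) (hV : 0 ≤ V) (ht : 0 < t) :
    (V + (V / t) ^ 2) / (t + V / t) ^ 2 = V / (V + t ^ 2) := by
  have ht' : t ≠ 0 := ht.ne'
  have h2 : (0:ℝ) < t ^ 2 + V := by positivity
  field_simp
  ring

private lemma cantelli_mono_aux (V t s T : ℝ) (hV : 0 ≤ V) (hT : 0 < T) (hTt : T ≤ t)
    (hVs : V ≤ s) : V / (V + t ^ 2) ≤ s / (s + T ^ 2) := by
  have ht : 0 < t := lt_of_lt_of_le hT hTt
  have hs : 0 ≤ s := le_trans hV hVs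
  rw [div_le_div_iff₀ (by positivity) (by positivity)]
  nlinarith [mul_le_mul hVs (pow_le_pow_left₀ hT.le hTt 2) (sq_nonneg T) hs]

private lemma cantelli_scale_aux (B c k : ℝ) (hk : 0 < k) (hB : 0 < B) :
    (k * B) / (k * B + (k * c) ^ 2) = B / (B + k * c ^ 2) := by
  have h1 : (0:ℝ) < k * B + (k * c) ^ 2 := by positivity
  have h2 : (0:ℝ) < B + k * c ^ 2 := by positivity
  rw [div_eq_div_iff h1.ne' h2.ne']
  ring

/-- Cantelli bound for a majority of weakly correlated Bernoulli
variables.  If `Z₁, …, Z_k` are `{0,1}`-valued with `P(Z_i = 1) = p_i ≤ p < 1/2` and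
pairwise covariances `Cov(Z_i, Z_j) ≤ ρ p(1−p)` for `i ≠ j` with `0 ≤ ρ < 1`, then
`P(∑ Z_i ≥ k/2) ≤ p(1−p)[1+(k−1)ρ] / (p(1−p)[1+(k−1)ρ] + k(1/2 − p)²)`. -/
theorem cantelli_majority_vote_bound
    {Ω : Type*} [MeasurableSpace Ω] (μ : Measure Ω) [IsProbabilityMeasure μ]
    (k : ℕ) (hk : 1 ≤ k) (Z : Fin k → Ω → ℝ)
    (hmeas : ∀ i, Measurable (Z i))
    (hval : ∀ i ω, Z i ω = 0 ∨ Z i ω = 1)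
    (p : ℝ) (hp0 : 0 < p) (hp : p < 1 / 2)
    (hpi : ∀ i, (μ {ω | Z i ω = 1}).toReal ≤ p)
    (ρ : ℝ) (hρ0 : 0 ≤ ρ) (hρ1 : ρ < 1)
    (hcov : ∀ i j, i ≠ j →
      (∫ ω, (Z i ω - ∫ ω', Z i ω' ∂μ) * (Z j ω - ∫ ω', Z j ω' ∂μ) ∂μ) ≤
        ρ * (p * (1 - p))) :
    (μ {ω | (k : ℝ) / 2 ≤ ∑ i, Z i ω}).toReal ≤
      p * (1 - p) * (1 + ((k : ℝ) - 1) * ρ) /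
        (p * (1 - p) * (1 + ((k : ℝ) - 1) * ρ) + k * (1 / 2 - p) ^ 2) := by
  -- general integrability lemma for bounded measurable functions
  have bdd_int : ∀ (f : Ω → ℝ) (C : ℝ), Measurable f → (∀ ω, |f ω| ≤ C) → Integrable f μ := by
    intro f C hf hC
    exact (integrable_const C).mono' hf.aestronglyMeasurable (ae_of_all _ hC)
  have hZ0 : ∀ i ω, 0 ≤ Z i ω := by intro i ω; rcases hval i ω with h | h <;> simp [h]
  have hZ1 : ∀ i ω, Z i ω ≤ 1 := by intro i ω; rcases hval i ω with h | h <;> simp [h]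
  have hZsq : ∀ i ω, Z i ω ^ 2 = Z i ω := by
    intro i ω; rcases hval i ω with h | h <;> simp [h]
  have intZ : ∀ i, Integrable (Z i) μ := fun i =>
    bdd_int _ 1 (hmeas i) (fun ω => abs_le.2 ⟨by linarith [hZ0 i ω], hZ1 i ω⟩)
  set pi : Fin k → ℝ := fun i => (μ {ω | Z i ω = 1}).toReal with hpidef
  -- ∫ Z i = pi i
  have hEZ : ∀ i, ∫ ω, Z i ω ∂μ = pi i := by
    intro i
    have hset : MeasurableSet {ω | Z i ω = 1} := hmeas i (measurableSet_singleton 1)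
    have : (fun ω => Z i ω) = Set.indicator {ω | Z i ω = 1} 1 := by
      funext ω
      rcases hval i ω with h | h
      · have : ω ∉ {ω | Z i ω = 1} := by simp [h]
        simp [this, h]
      · have : ω ∈ {ω | Z i ω = 1} := by simp [h]
        simp [this, h]
    rw [this, integral_indicator_one hset]
    rfl
  have hpi0 : ∀ i, 0 ≤ pi i := fun i => ENNReal.toReal_nonneg
  -- variance of Z i
  have hvar : ∀ i, ∫ ω, (Z i ω - pi i) ^ 2 ∂μ = pi i * (1 - pi i) := by
    intro i
    have heq : ∀ ω, (Z i ω - pi i) ^ 2 = Z i ω * (1 - 2 * pi i) + pi i ^ 2 := by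
      intro ω; have := hZsq i ω; nlinarith [hZsq i ω]
    calc ∫ ω, (Z i ω - pi i) ^ 2 ∂μ
        = ∫ ω, (Z i ω * (1 - 2 * pi i) + pi i ^ 2) ∂μ := by simp_rw [heq]
      _ = (∫ ω, Z i ω ∂μ) * (1 - 2 * pi i) + pi i ^ 2 := by
          rw [integral_add ((intZ i).mul_const _) (integrable_const _),
            integral_mul_const, integral_const]
          simp
      _ = pi i * (1 - pi i) := by rw [hEZ i]; ring

  have hpile : ∀ i, pi i ≤ p := hpi
  -- rewrite covariance hypothesis
  have hcov' : ∀ i j, i ≠ j →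
      (∫ ω, (Z i ω - pi i) * (Z j ω - pi j) ∂μ) ≤ ρ * (p * (1 - p)) := by
    intro i j hij
    have h := hcov i j hij
    rwa [hEZ i, hEZ j] at h
  set S : Ω → ℝ := fun ω => ∑ i, Z i ω with hSdef
  have hSmeas : Measurable S := Finset.measurable_sum _ fun i _ => hmeas i
  have hS0 : ∀ ω, 0 ≤ S ω := fun ω => Finset.sum_nonneg fun i _ => hZ0 i ω
  have hSk : ∀ ω, S ω ≤ k := by
    intro ω
    calc S ω ≤ ∑ _i : Fin k, (1 : ℝ) := Finset.sum_le_sum fun i _ => hZ1 i ω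
      _ = k := by simp
  have intS : Integrable S μ := integrable_finset_sum _ fun i _ => intZ i
  set m : ℝ := ∑ i, pi i with hmdef
  have hES : ∫ ω, S ω ∂μ = m := by
    rw [hSdef, integral_finset_sum _ fun i _ => intZ i]
    exact Finset.sum_congr rfl fun i _ => hEZ i
  have hm0 : 0 ≤ m := Finset.sum_nonneg fun i _ => hpi0 i
  have hmkp : m ≤ k * p := by
    calc m ≤ ∑ _i : Fin k, p := Finset.sum_le_sum fun i _ => hpile i
      _ = k * p := by simp [mul_comm]
  have intC : ∀ i j, Integrable (fun ω => (Z i ω - pi i) * (Z j ω - pi j)) μ := by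
    intro i j
    apply bdd_int _ 1 (((hmeas i).sub measurable_const).mul ((hmeas j).sub measurable_const))
    intro ω
    show |(Z i ω - pi i) * (Z j ω - pi j)| ≤ 1
    rw [abs_mul]
    have h1 : |Z i ω - pi i| ≤ 1 := abs_le.2 ⟨by have := hpile i; linarith [hZ0 i ω, hp], by
      have := hpi0 i; linarith [hZ1 i ω]⟩
    have h2 : |Z j ω - pi j| ≤ 1 := abs_le.2 ⟨by have := hpile j; linarith [hZ0 j ω, hp], by
      have := hpi0 j; linarith [hZ1 j ω]⟩
    nlinarith [abs_nonneg (Z i ω - pi i), abs_nonneg (Z j ω - pi j)]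
  have intSm2 : Integrable (fun ω => (S ω - m) ^ 2) μ := by
    apply bdd_int _ ((k + |m|) ^ 2) ((hSmeas.sub measurable_const).pow_const 2)
    intro ω
    show |(S ω - m) ^ 2| ≤ (k + |m|) ^ 2
    rw [abs_of_nonneg (sq_nonneg _)]
    nlinarith [hS0 ω, hSk ω, le_abs_self m, neg_abs_le m, abs_nonneg m]
  set V : ℝ := ∫ ω, (S ω - m) ^ 2 ∂μ with hVdef
  have hV0 : 0 ≤ V := integral_nonneg fun ω => sq_nonneg _
  have hk1 : (1 : ℝ) ≤ k := Nat.one_le_cast.2 hk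
  set B : ℝ := p * (1 - p) * (1 + ((k : ℝ) - 1) * ρ) with hBdef
  have hBpos : 0 < B := by
    have h1 : 0 ≤ ((k : ℝ) - 1) * ρ := mul_nonneg (by linarith) hρ0
    have h2 : 0 < p * (1 - p) := by nlinarith
    rw [hBdef]
    nlinarith
  -- bound on the variance
  have hVle : V ≤ k * B := by
    have hVexp : V = ∑ i, ∑ j, ∫ ω, (Z i ω - pi i) * (Z j ω - pi j) ∂μ := by
      have heq : ∀ ω, (S ω - m) ^ 2 = ∑ i, ∑ j, (Z i ω - pi i) * (Z j ω - pi j) := by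
        intro ω
        have h1 : S ω - m = ∑ i, (Z i ω - pi i) := by
          rw [hSdef, hmdef, Finset.sum_sub_distrib]
        rw [h1, sq, Finset.sum_mul_sum]
      rw [hVdef]
      simp_rw [heq]
      rw [integral_finset_sum _ fun i _ => integrable_finset_sum _ fun j _ => intC i j]
      exact Finset.sum_congr rfl fun i _ => integral_finset_sum _ fun j _ => intC i j
    rw [hVexp]
    have hterm : ∀ i : Fin k, (∑ j, ∫ ω, (Z i ω - pi i) * (Z j ω - pi j) ∂μ)
        ≤ p * (1 - p) + ((k : ℝ) - 1) * (ρ * (p * (1 - p))) := by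
      intro i
      rw [← Finset.add_sum_erase _ _ (Finset.mem_univ i)]
      have hdiag : (∫ ω, (Z i ω - pi i) * (Z i ω - pi i) ∂μ) ≤ p * (1 - p) := by
        have h1 : (∫ ω, (Z i ω - pi i) * (Z i ω - pi i) ∂μ) = pi i * (1 - pi i) := by
          rw [← hvar i]
          congr 1
          funext ω
          ring
        rw [h1]
        nlinarith [hpile i, hpi0 i]
      have hoff : (∑ j ∈ Finset.univ.erase i, ∫ ω, (Z i ω - pi i) * (Z j ω - pi j) ∂μ)
          ≤ ((k : ℝ) - 1) * (ρ * (p * (1 - p))) := by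
        have hcard : ((Finset.univ.erase i).card : ℝ) = (k : ℝ) - 1 := by
          rw [Finset.card_erase_of_mem (Finset.mem_univ i)]
          simp [Nat.cast_sub hk]
        calc (∑ j ∈ Finset.univ.erase i, ∫ ω, (Z i ω - pi i) * (Z j ω - pi j) ∂μ)
            ≤ ∑ _j ∈ Finset.univ.erase i, ρ * (p * (1 - p)) :=
              Finset.sum_le_sum fun j hj => hcov' i j (Finset.ne_of_mem_erase hj).symm
          _ = ((k : ℝ) - 1) * (ρ * (p * (1 - p))) := by
              rw [Finset.sum_const, nsmul_eq_mul, hcard]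
      linarith
    calc (∑ i, ∑ j, ∫ ω, (Z i ω - pi i) * (Z j ω - pi j) ∂μ)
        ≤ ∑ _i : Fin k, (p * (1 - p) + ((k : ℝ) - 1) * (ρ * (p * (1 - p)))) :=
          Finset.sum_le_sum fun i _ => hterm i
      _ = k * B := by rw [Finset.sum_const, nsmul_eq_mul, Finset.card_univ, Fintype.card_fin, hBdef]; ring
  -- Cantelli step
  set t : ℝ := (k : ℝ) / 2 - m with htdef
  set T : ℝ := (k : ℝ) * (1 / 2 - p) with hTdef
  have hTpos : 0 < T := by rw [hTdef]; nlinarith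
  have hTt : T ≤ t := by rw [hTdef, htdef]; linarith
  have htpos : 0 < t := lt_of_lt_of_le hTpos hTt
  set lam : ℝ := V / t with hlamdef
  have hlam0 : 0 ≤ lam := div_nonneg hV0 htpos.le
  set f : Ω → ℝ := fun ω => (S ω - m + lam) ^ 2 with hfdef
  have hfeq : f = fun ω => (S ω - m) ^ 2 + (2 * lam) * (S ω - m) + lam ^ 2 := by
    funext ω; rw [hfdef]; ring
  have int2 : Integrable (fun ω => (2 * lam) * (S ω - m)) μ :=
    ((intS.sub (integrable_const m)).const_mul _)
  have intf : Integrable f μ := by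
    rw [hfeq]; exact (intSm2.add int2).add (integrable_const _)
  have e0 : ∫ ω, (S ω - m) ∂μ = 0 := by
    rw [integral_sub intS (integrable_const m), hES, integral_const]
    simp
  have hintf : ∫ ω, f ω ∂μ = V + lam ^ 2 := by
    calc ∫ ω, f ω ∂μ
        = ∫ ω, ((S ω - m) ^ 2 + 2 * lam * (S ω - m) + lam ^ 2) ∂μ := by rw [hfeq]
      _ = (∫ ω, ((S ω - m) ^ 2 + 2 * lam * (S ω - m)) ∂μ) + lam ^ 2 := by
          rw [integral_add (f := fun ω => (S ω - m) ^ 2 + 2 * lam * (S ω - m))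
            (g := fun _ => lam ^ 2) (intSm2.add int2) (integrable_const _), integral_const]
          simp
      _ = ((∫ ω, (S ω - m) ^ 2 ∂μ) + ∫ ω, 2 * lam * (S ω - m) ∂μ) + lam ^ 2 := by
          rw [integral_add (f := fun ω => (S ω - m) ^ 2)
            (g := fun ω => 2 * lam * (S ω - m)) intSm2 int2]
      _ = V + lam ^ 2 := by rw [integral_const_mul, e0, ← hVdef]; ring
  have hmark := mul_meas_ge_le_integral_of_nonneg
    (ae_of_all μ fun ω => sq_nonneg (S ω - m + lam)) intf ((t + lam) ^ 2)
  have hsub : μ {ω | (k : ℝ) / 2 ≤ S ω} ≤ μ {x | (t + lam) ^ 2 ≤ f x} := by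
    apply measure_mono
    intro ω hω
    have h1 : t + lam ≤ S ω - m + lam := by
      rw [htdef] at *; simp only [Set.mem_setOf_eq] at hω; linarith
    have h2 : 0 ≤ t + lam := by linarith
    simp only [Set.mem_setOf_eq, hfdef]
    exact pow_le_pow_left₀ h2 h1 2
  have hPA : ((t + lam) ^ 2) * (μ {ω | (k : ℝ) / 2 ≤ S ω}).toReal ≤ V + lam ^ 2 := by
    have h1 : (μ {ω | (k : ℝ) / 2 ≤ S ω}).toReal ≤ (μ {x | (t + lam) ^ 2 ≤ f x}).toReal :=
      ENNReal.toReal_mono (measure_ne_top μ _) hsub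
    calc ((t + lam) ^ 2) * (μ {ω | (k : ℝ) / 2 ≤ S ω}).toReal
        ≤ ((t + lam) ^ 2) * (μ {x | (t + lam) ^ 2 ≤ f x}).toReal := by
          apply mul_le_mul_of_nonneg_left h1 (sq_nonneg _)
      _ ≤ ∫ ω, f ω ∂μ := hmark
      _ = V + lam ^ 2 := hintf
  have hεpos : 0 < (t + lam) ^ 2 := by positivity
  have hPA2 : (μ {ω | (k : ℝ) / 2 ≤ S ω}).toReal ≤ (V + lam ^ 2) / (t + lam) ^ 2 :=
    (le_div_iff₀' hεpos).2 hPA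
  -- algebra
  have hkey : (V + lam ^ 2) / (t + lam) ^ 2 = V / (V + t ^ 2) := by
    rw [hlamdef]
    exact cantelli_alg_aux V t hV0 htpos
  have hstep2 : V / (V + t ^ 2) ≤ (k * B) / (k * B + T ^ 2) :=
    cantelli_mono_aux V t (k * B) T hV0 hTpos hTt hVle
  have hstep3 : ((k : ℝ) * B) / ((k : ℝ) * B + T ^ 2) = B / (B + k * (1 / 2 - p) ^ 2) := by
    rw [hTdef]
    exact cantelli_scale_aux B (1 / 2 - p) k (by linarith) hBpos
  calc (μ {ω | (k : ℝ) / 2 ≤ ∑ i, Z i ω}).toReal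
      ≤ (V + lam ^ 2) / (t + lam) ^ 2 := hPA2
    _ = V / (V + t ^ 2) := hkey
    _ ≤ (k * B) / (k * B + T ^ 2) := hstep2
    _ = B / (B + k * (1 / 2 - p) ^ 2) := hstep3
end
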